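/- Consider n receivers, each receiver r having a knowledge subspace V_r ⊆ F_q^m, with q ≥ n. Let u_1 < u_2 < ... < u_k be the distinct oldest unseen indices of the receivers, where the oldest unseen index of receiver r is the smallest index not seen by V_r, and assume each receiver has seen all indices u_i smaller than its own oldest unseen index. Then there exist coefficients α_1, ..., α_k ∈ F_q such that the vector g = Σ_i α_i e_{u_i} has the property that for every receiver r, the space span(V_r ∪ {g}) sees the oldest unseen index of r. -/

import Mathlib

/-- A subspace `V` "sees" index `k` if some vector of `V` has its first nonzero
coordinate at position `k`. -/
def sees {F : Type*} [Field F] {m : ℕ} (V : Submodule F (Fin m → F)) (k : Fin m) : Prop :=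
  ∃ v ∈ V, v k ≠ 0 ∧ ∀ i, i < k → v i = 0

/-!
Let `Z_k` be the space of vectors vanishing at all indices `≤ k`. Since `V` sees every index
below `k`, any `x` can be reduced modulo `V` to vanish below `k`; hence adjoining `x` makes `V` see
`k` as soon as `x ∉ V + Z_k`. Since `V` does not see `k`, `e_k ∉ V + Z_k`, so pulling `V_r + Z_{u_r}`
back along `α ↦ ∑ r, α_r e_{u_r}` gives `n` proper subspaces of `F^n`, and over a field with at
least `n` elements these cannot cover the whole space.
-/

open Finset Submodule

theorem Submodule.card_mul_card_le_of_ne_top {K M : Type*} [Field K] [AddCommGroup M]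
    [Module K M] [Finite M] {p : Submodule K M} (hp : p ≠ ⊤) :
    Nat.card p * Nat.card K ≤ Nat.card M := by
  rw [p.card_eq_card_quotient_mul_card]
  gcongr
  have : Finite (M ⧸ p) := Finite.of_surjective _ p.mkQ_surjective
  have : Nontrivial (M ⧸ p) := Submodule.Quotient.nontrivial_iff.mpr hp
  obtain ⟨y, hy⟩ := exists_ne (0 : M ⧸ p)
  exact Nat.card_le_card_of_injective _ (smul_left_injective K hy)

theorem Submodule.exists_forall_notMem_of_card_le {ι K M : Type*} [Fintype ι] [Field K]
    [Fintype K] [AddCommGroup M] [Module K M] [Finite M] (p : ι → Submodule K M)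
    (hp : ∀ i, p i ≠ ⊤) (hcard : Fintype.card ι ≤ Fintype.card K) :
    ∃ x, ∀ i, x ∉ p i := by
  classical
  have := Fintype.ofFinite M
  -- Each `p i` has at most `|M| / q` elements and all contain `0`, so `q` of them cover at most
  -- `1 + q (|M| / q - 1) < |M|` vectors.
  by_contra! hcover
  obtain ⟨i₀, -⟩ := hcover 0
  set q := Fintype.card K
  set a : ι → ℕ := fun i => #{x | x ∈ p i}
  have ha : ∀ i, a i * q ≤ Fintype.card M := fun i => by
    simpa [a, ← Fintype.card_subtype, Nat.card_eq_fintype_card] using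
      card_mul_card_le_of_ne_top (hp i)
  have ha_pos : ∀ i, 1 ≤ a i := fun i => card_pos.mpr ⟨0, by simp⟩
  have hq : 2 ≤ q := Fintype.one_lt_card
  have hsub : univ.erase (0 : M) ⊆ univ.biUnion fun i => ({x | x ∈ p i} : Finset M).erase 0 := by
    intro x hx
    obtain ⟨i, hi⟩ := hcover x
    simpa [(mem_erase.mp hx).1] using ⟨i, hi⟩
  have hle : Fintype.card M - 1 ≤ ∑ i, (a i - 1) := by
    simpa [card_erase_of_mem] using (card_le_card hsub).trans card_biUnion_le
  have hsum : (∑ i, (a i - 1)) * q ≤ (Fintype.card M - q) * q :=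
    calc (∑ i, (a i - 1)) * q = ∑ i, (a i * q - q) := by
          rw [sum_mul]; exact sum_congr rfl fun i _ => Nat.sub_one_mul _ _
      _ ≤ ∑ _i : ι, (Fintype.card M - q) := sum_le_sum fun i _ => Nat.sub_le_sub_right (ha i) q
      _ = Fintype.card ι * (Fintype.card M - q) := by simp
      _ ≤ (Fintype.card M - q) * q := by rw [mul_comm]; exact Nat.mul_le_mul_left _ hcard
  have := Nat.le_of_mul_le_mul_right hsum (Fintype.card_pos : 0 < q)
  have : q ≤ Fintype.card M := (Nat.le_mul_of_pos_left q (ha_pos i₀)).trans (ha i₀)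
  omega

section Sees

variable {F : Type*} [Field F] {m : ℕ} {V : Submodule F (Fin m → F)}

theorem exists_mem_eqOn_of_forall_sees {s : Finset (Fin m)} (hs : ∀ j ∈ s, sees V j)
    (x : Fin m → F) : ∃ v ∈ V, Set.EqOn x v s := by
  induction s using Finset.induction_on_max with
  | empty => exact ⟨0, V.zero_mem, by simp⟩
  | insert a s hlt ih =>
    obtain ⟨v, hv, hxv⟩ := ih fun j hj => hs j (mem_insert_of_mem hj)
    obtain ⟨w, hw, hwa, hw_lt⟩ := hs a (mem_insert_self a s)
    refine ⟨v + ((x a - v a) / w a) • w, V.add_mem hv (V.smul_mem _ hw), ?_⟩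
    intro i hi
    rcases mem_insert.mp hi with rfl | hi
    · simp [hwa]
    · simp [hw_lt i (hlt i hi), hxv hi]

def vanishingUpTo (k : Fin m) : Submodule F (Fin m → F) :=
  pi (Set.Iic k) fun _ => ⊥

@[simp]
theorem mem_vanishingUpTo {k : Fin m} {x : Fin m → F} :
    x ∈ vanishingUpTo k ↔ ∀ i ≤ k, x i = 0 := by
  simp [vanishingUpTo]

theorem sees_sup_span_of_notMem {k : Fin m} (hseen : ∀ j < k, sees V j) {x : Fin m → F}
    (hx : x ∉ V ⊔ vanishingUpTo k) : sees (V ⊔ span F {x}) k := by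
  obtain ⟨v, hv, hxv⟩ := exists_mem_eqOn_of_forall_sees (s := Iio k)
    (fun j hj => hseen j (mem_Iio.mp hj)) x
  refine ⟨x - v, sub_mem (mem_sup_right (mem_span_singleton_self x)) (mem_sup_left hv), ?_,
    fun i hi => sub_eq_zero.mpr (hxv (by simpa using hi))⟩
  intro hk
  have hxv_van : x - v ∈ vanishingUpTo k := by
    refine mem_vanishingUpTo.mpr fun i hi => ?_
    rcases hi.lt_or_eq with hi | rfl
    · exact sub_eq_zero.mpr (hxv (by simpa using hi))
    · exact hk
  exact hx (by simpa using add_mem (mem_sup_left hv) (mem_sup_right hxv_van))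

theorem single_notMem_sup_vanishingUpTo {k : Fin m} (hunseen : ¬ sees V k) :
    Pi.single k 1 ∉ V ⊔ vanishingUpTo k := by
  intro h
  obtain ⟨v, hv, z, hz, hvz⟩ := mem_sup.mp h
  rw [mem_vanishingUpTo] at hz
  refine hunseen ⟨v, hv, ?_, fun i hi => ?_⟩
  · have hvk : v k = 1 := by simpa [hz k le_rfl] using congrFun hvz k
    simp [hvk]
  · simpa [hz i hi.le, hi.ne] using congrFun hvz i

end Sees

/-- **Correctness of the coding module.**  With `n` receivers having knowledge spaces
`V r ⊆ F_q^m` (`q ≥ n`), where `oldest r` is the oldest unseen index of receiver `r`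
(unseen, and all smaller indices are seen), there is a vector `g` supported only on
the oldest unseen indices such that adjoining `g` makes every receiver see its
oldest unseen index. -/
theorem stmt_5 {F : Type*} [Field F] [Fintype F] {n m : ℕ}
    (hq : n ≤ Fintype.card F)
    (V : Fin n → Submodule F (Fin m → F)) (oldest : Fin n → Fin m)
    (hunseen : ∀ r, ¬ sees (V r) (oldest r))
    (hseen : ∀ r, ∀ j : Fin m, j < oldest r → sees (V r) j) :
    ∃ g : Fin m → F,
      (∀ j : Fin m, g j ≠ 0 → ∃ r, oldest r = j) ∧
      (∀ r, sees (V r ⊔ Submodule.span F {g}) (oldest r)) := by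
  classical
  set L := Fintype.linearCombination F fun r => (Pi.single (oldest r) 1 : Fin m → F)
  have hproper : ∀ r, (V r ⊔ vanishingUpTo (oldest r)).comap L ≠ ⊤ := fun r htop => by
    have hr : Pi.single r 1 ∈ (V r ⊔ vanishingUpTo (oldest r)).comap L := htop ▸ mem_top
    exact single_notMem_sup_vanishingUpTo (hunseen r) (by simpa [L] using hr)
  obtain ⟨α, hα⟩ := exists_forall_notMem_of_card_le _ hproper (by simpa using hq)
  refine ⟨L α, fun j hj => ?_, fun r => sees_sup_span_of_notMem (hseen r) (hα r)⟩
  by_contra! hj_out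
  simp [L, Fintype.linearCombination_apply, Finset.sum_apply, hj_out] at hj
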